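/- Let w ≥ 1, let d ≥ 1, let M be a d×d complex matrix, and let ψ ∈ ℂ^d. Define the post-interaction state Φ = (1/√2)(e_{0^w} ⊗ ψ + e_{1^w} ⊗ Mψ) on the register ℂ^{(Fin w → {0,1})} ⊗ ℂ^d, where e_g denotes the computational basis vector at g. For each X-basis outcome string f : Fin w → {0,1}, let ⟨x_f| denote the bra of the X-basis state x_f(g) = 2^{−w/2}(−1)^{f·g}. Then (⟨x_f| ⊗ I) Φ = 2^{−w/2} √2 · ((I + (−1)^{|f|} M)/2) ψ, where |f| = Σ_i f(i) mod 2 is the parity of the outcome string. In particular, when M is a Hermitian unitary, measuring every cat qubit in the X basis and taking the parity of the outcomes realizes a projective measurement of the observable M on ψ, with outcome sign (−1)^{|f|}. -/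

import Mathlib

open Matrix
open scoped Classical

noncomputable section

/-- The X-basis state on `w` qubits labelled by an outcome string `f : Fin w → {0,1}`:
`x_f(g) = 2^{−w/2} (−1)^{f·g}` where `f·g = Σ_i f(i)g(i)`. -/
def xBasis (w : ℕ) (f : Fin w → Fin 2) : (Fin w → Fin 2) → ℂ :=
  fun g => ((Real.sqrt 2 : ℂ)⁻¹) ^ w * (-1 : ℂ) ^ (∑ i, (f i : ℕ) * (g i : ℕ))

/-!
Contracting the cat register with `⟨x_f|` only sees the two branches `0^w` and `1^w` of the
cat state. The X-basis amplitudes there are `2^{-w/2}` and `2^{-w/2} (-1)^{|f|}`, because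
`f · 0^w = 0` and `f · 1^w = Σ_i f(i)`; so the contraction is
`2^{-w/2} (1/√2) (ψ + (-1)^{|f|} M ψ)`, and `1/√2 = √2 / 2`.
-/

lemma sum_mul_ite_add_ite {G R : Type*} [Fintype G] [DecidableEq G] [CommSemiring R]
    (x : G → R) (g₀ g₁ : G) (c u v : R) :
    ∑ g, x g * (c * ((if g = g₀ then u else 0) + (if g = g₁ then v else 0))) =
      c * (x g₀ * u + x g₁ * v) := by
  simp_rw [mul_left_comm _ c, ← Finset.mul_sum]
  simp [mul_add, Finset.sum_add_distrib]

lemma inv_sqrt_two_eq_sqrt_two_mul_inv_two :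
    (Real.sqrt 2 : ℂ)⁻¹ = Real.sqrt 2 * 2⁻¹ := by
  have hsq : (Real.sqrt 2 : ℂ) * Real.sqrt 2 = 2 := by
    exact_mod_cast Real.mul_self_sqrt zero_le_two
  have hne : (Real.sqrt 2 : ℂ) ≠ 0 := by
    exact_mod_cast (Real.sqrt_pos.mpr zero_lt_two).ne'
  field_simp
  rw [sq, hsq]

lemma conj_xBasis (w : ℕ) (f g : Fin w → Fin 2) :
    starRingEnd ℂ (xBasis w f g) = xBasis w f g := by
  simp [xBasis]

lemma xBasis_zero (w : ℕ) (f : Fin w → Fin 2) :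
    xBasis w f (fun _ => 0) = ((Real.sqrt 2 : ℂ)⁻¹) ^ w := by
  simp [xBasis]

lemma xBasis_one (w : ℕ) (f : Fin w → Fin 2) :
    xBasis w f (fun _ => 1) = ((Real.sqrt 2 : ℂ)⁻¹) ^ w * (-1) ^ ((∑ i, (f i : ℕ)) % 2) := by
  simp [xBasis, ← neg_one_pow_eq_pow_mod_two]

theorem cat_based_measurement_gadget_general
    (w d : ℕ)
    (M : Matrix (Fin d) (Fin d) ℂ) (ψ : Fin d → ℂ) (f : Fin w → Fin 2) :
    let Φ : (Fin w → Fin 2) → Fin d → ℂ := fun g a =>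
      (Real.sqrt 2 : ℂ)⁻¹ *
        ((if g = (fun _ => 0) then ψ a else 0) +
         (if g = (fun _ => 1) then M.mulVec ψ a else 0))
    (fun a => ∑ g : Fin w → Fin 2, (starRingEnd ℂ) (xBasis w f g) * Φ g a)
      = (((Real.sqrt 2 : ℂ)⁻¹) ^ w * (Real.sqrt 2 : ℂ)) •
          ((2 : ℂ)⁻¹ •
            ((1 + ((-1 : ℂ) ^ ((∑ i, (f i : ℕ)) % 2)) • M).mulVec ψ)) := by
  intro Φ
  funext a
  simp only [conj_xBasis]
  rw [sum_mul_ite_add_ite, xBasis_zero, xBasis_one, inv_sqrt_two_eq_sqrt_two_mul_inv_two]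
  simp only [add_mulVec, one_mulVec, smul_mulVec, Pi.smul_apply, Pi.add_apply, smul_eq_mul]
  ring

/-- Let `w ≥ 1`, `d ≥ 1`, `M` a `d×d` complex matrix and `ψ ∈ ℂ^d`.  Define the
post-interaction state `Φ = (1/√2)(e_{0^w} ⊗ ψ + e_{1^w} ⊗ Mψ)` on the register
`ℂ^{(Fin w → {0,1})} ⊗ ℂ^d`.  For each X-basis outcome string `f : Fin w → {0,1}`,
`(⟨x_f| ⊗ I) Φ = 2^{−w/2} √2 · ((I + (−1)^{|f|} M)/2) ψ`, where `|f| = Σ_i f(i) mod 2`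
is the parity of the outcome string.  In particular, when `M` is a Hermitian unitary,
measuring every cat qubit in the X basis and taking the parity of the outcomes realizes a
projective measurement of the observable `M` on `ψ`, with outcome sign `(−1)^{|f|}`. -/
theorem cat_based_measurement_gadget
    (w d : ℕ) (hw : 1 ≤ w) (hd : 1 ≤ d)
    (M : Matrix (Fin d) (Fin d) ℂ) (ψ : Fin d → ℂ) (f : Fin w → Fin 2) :
    let Φ : (Fin w → Fin 2) → Fin d → ℂ := fun g a =>
      (Real.sqrt 2 : ℂ)⁻¹ *
        ((if g = (fun _ => 0) then ψ a else 0) +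
         (if g = (fun _ => 1) then M.mulVec ψ a else 0))
    (fun a => ∑ g : Fin w → Fin 2, (starRingEnd ℂ) (xBasis w f g) * Φ g a)
      = (((Real.sqrt 2 : ℂ)⁻¹) ^ w * (Real.sqrt 2 : ℂ)) •
          ((2 : ℂ)⁻¹ •
            ((1 + ((-1 : ℂ) ^ ((∑ i, (f i : ℕ)) % 2)) • M).mulVec ψ)) :=
  cat_based_measurement_gadget_general w d M ψ f
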